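/- Let R > 0 and ρ ≥ 0 with ρR < 1, and let P_0, P_1, …, P_T be probability distributions on ℝ^d × {−1,1} such that P_{t+1} is a ρ-shift of P_t for each 0 ≤ t < T. Suppose there exists θ* ∈ Θ_R with L_r(θ*, P_t) ≤ α_0 for all t, and let θ_0 ∈ Θ_R satisfy L_r(θ_0, P_0) ≤ α_0. For each 1 ≤ t ≤ T, let θ_t ∈ Θ_R minimize over Θ_R the pseudolabeled ramp loss on the X-marginal of P_t with pseudolabels generated by θ_{t−1}. Then L_r(θ_T, P_T) ≤ (2/(1 − ρR))^{T+1} · α_0. -/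

import Mathlib

open MeasureTheory

noncomputable section

/-- `ℝ^d` with the Euclidean norm. -/
abbrev Euc (d : ℕ) : Type := EuclideanSpace ℝ (Fin d)

/-- The ramp loss: `r(m) = 1` for `m ≤ 0`, `1 - m` for `0 ≤ m ≤ 1`, `0` for `m ≥ 1`. -/
def ramp (m : ℝ) : ℝ := max 0 (min 1 (1 - m))

/-- `sign(t) = 1` if `t ≥ 0`, `-1` otherwise. -/
def sgn (t : ℝ) : ℝ := if 0 ≤ t then 1 else -1

/-- The linear model `M_θ(x) = ⟨w, x⟩ + b` for `θ = (w, b)`. -/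
def model {d : ℕ} (θ : Euc d × ℝ) (x : Euc d) : ℝ := (inner ℝ θ.1 x : ℝ) + θ.2

/-- Ramp loss of a linear model on a distribution over `ℝ^d × {-1,1}`. -/
def lossR {d : ℕ} (θ : Euc d × ℝ) (P : Measure (Euc d × ℝ)) : ℝ :=
  ∫ p, ramp (p.2 * model θ p.1) ∂P

/-- 0-1 error of a linear model on a distribution over `ℝ^d × {-1,1}`. -/
def errP {d : ℕ} (θ : Euc d × ℝ) (P : Measure (Euc d × ℝ)) : ℝ :=
  (P {p | sgn (model θ p.1) ≠ p.2}).toReal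

/-- Pseudolabeled ramp loss of `θ'` on the `X`-marginal of `Q`, with pseudolabels from `θ`. -/
def pseudoLossR {d : ℕ} (θ θ' : Euc d × ℝ) (Q : Measure (Euc d × ℝ)) : ℝ :=
  ∫ x, ramp (sgn (model θ x) * model θ' x) ∂(Q.map Prod.fst)

/-- `Q` is a `ρ`-shift of `P`: there are measurable maps `f₋₁, f₁`, each moving every point by
at most `ρ`, such that `Q` is the law of `(f_Y(X), Y)` for `(X, Y) ∼ P`. -/
def IsShift {d : ℕ} (P Q : Measure (Euc d × ℝ)) (ρ : ℝ) : Prop :=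
  ∃ fneg fpos : Euc d → Euc d, Measurable fneg ∧ Measurable fpos ∧
    (∀ x, ‖fneg x - x‖ ≤ ρ) ∧ (∀ x, ‖fpos x - x‖ ≤ ρ) ∧
    Q = P.map (fun p => (if p.2 = 1 then fpos p.1 else fneg p.1, p.2))

lemma ramp_nonneg (m : ℝ) : 0 ≤ ramp m := le_max_left _ _
lemma ramp_le_one (m : ℝ) : ramp m ≤ 1 := by
  unfold ramp
  rcases le_or_gt (min 1 (1-m)) 0 with h | h
  · simp [max_eq_left h]
  · rw [max_eq_right h.le]; exact min_le_left _ _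
lemma ramp_ge {m c : ℝ} (hm : m ≤ c) (hc0 : 0 ≤ c) : 1 - c ≤ ramp m := by
  unfold ramp
  have : 1 - c ≤ min 1 (1 - m) := le_min (by linarith) (by linarith)
  exact this.trans (le_max_right _ _)
lemma continuous_ramp : Continuous ramp :=
  continuous_const.max (continuous_const.min (continuous_const.sub continuous_id))
lemma measurable_sgn : Measurable sgn :=
  Measurable.ite measurableSet_Ici measurable_const measurable_const
lemma sgn_mem (t : ℝ) : sgn t = 1 ∨ sgn t = -1 := by
  unfold sgn; split <;> simp
lemma measurable_model {d : ℕ} (θ : Euc d × ℝ) : Measurable (model θ) :=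
  ((continuous_const.inner continuous_id).add continuous_const).measurable
lemma ramp_mul_le (s y m : ℝ) : ramp (y * m) ≤ ramp (s * m) + (if s = y then 0 else 1) := by
  by_cases h : s = y
  · simp [h]
  · have h1 := ramp_le_one (y * m); have h2 := ramp_nonneg (s * m)
    simp only [h, if_false]; linarith
lemma integrable_of_bounded {α : Type*} [MeasurableSpace α] {μ : Measure α} [IsFiniteMeasure μ]
    {g : α → ℝ} (hg : Measurable g) (h0 : ∀ x, 0 ≤ g x) (h1 : ∀ x, g x ≤ 1) :
    Integrable g μ :=
  (integrable_const 1).mono' hg.aestronglyMeasurable (ae_of_all _ fun x => by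
    rw [Real.norm_eq_abs, abs_of_nonneg (h0 x)]; exact h1 x)

section core
variable {d : ℕ} {P Q : Measure (Euc d × ℝ)} {θ θ' θcur : Euc d × ℝ}

lemma measurable_loss_integrand (θ : Euc d × ℝ) :
    Measurable (fun p : Euc d × ℝ => ramp (p.2 * model θ p.1)) :=
  continuous_ramp.measurable.comp (measurable_snd.mul ((measurable_model θ).comp measurable_fst))

lemma measurable_pseudo_integrand (θ θ' : Euc d × ℝ) :
    Measurable (fun x : Euc d => ramp (sgn (model θ x) * model θ' x)) :=
  continuous_ramp.measurable.comp
    ((measurable_sgn.comp (measurable_model θ)).mul (measurable_model θ'))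

lemma measurableSet_err (θ : Euc d × ℝ) :
    MeasurableSet {p : Euc d × ℝ | sgn (model θ p.1) ≠ p.2} :=
  (measurableSet_eq_fun ((measurable_sgn.comp (measurable_model θ)).comp measurable_fst)
    measurable_snd).compl

lemma pseudoLossR_eq (θ θ' : Euc d × ℝ) (Q : Measure (Euc d × ℝ)) :
    pseudoLossR θ θ' Q = ∫ p, ramp (sgn (model θ p.1) * model θ' p.1) ∂Q := by
  unfold pseudoLossR
  rw [integral_map measurable_fst.aemeasurable
    (measurable_pseudo_integrand θ θ').aestronglyMeasurable]

lemma errP_eq (θ : Euc d × ℝ) (Q : Measure (Euc d × ℝ)) :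
    errP θ Q = ∫ p, ({p : Euc d × ℝ | sgn (model θ p.1) ≠ p.2}).indicator 1 p ∂Q := by
  rw [integral_indicator_one (measurableSet_err θ)]; rfl

lemma indicator_err_eq (θ : Euc d × ℝ) (p : Euc d × ℝ) :
    ({p : Euc d × ℝ | sgn (model θ p.1) ≠ p.2}).indicator (1 : Euc d × ℝ → ℝ) p
      = if sgn (model θ p.1) = p.2 then 0 else 1 := by
  by_cases h : sgn (model θ p.1) = p.2 <;> simp [Set.indicator, h]

/-- lemA : lossR θcur Q ≤ pseudoLossR θ θcur Q + errP θ Q -/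
lemma lossR_le_pseudo (θ θcur : Euc d × ℝ) (Q : Measure (Euc d × ℝ))
    [IsProbabilityMeasure Q] :
    lossR θcur Q ≤ pseudoLossR θ θcur Q + errP θ Q := by
  rw [pseudoLossR_eq, errP_eq]
  unfold lossR
  have hint1 : Integrable (fun p : Euc d × ℝ => ramp (sgn (model θ p.1) * model θcur p.1)) Q :=
    integrable_of_bounded ((measurable_pseudo_integrand θ θcur).comp measurable_fst)
      (fun _ => ramp_nonneg _) (fun _ => ramp_le_one _)
  have hint2 : Integrable
      (fun p => ({p : Euc d × ℝ | sgn (model θ p.1) ≠ p.2}).indicator (1 : Euc d × ℝ → ℝ) p) Q :=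
    integrable_of_bounded ((measurable_const.indicator (measurableSet_err θ)))
      (fun p => by rw [indicator_err_eq]; split <;> norm_num)
      (fun p => by rw [indicator_err_eq]; split <;> norm_num)
  rw [← integral_add hint1 hint2]
  refine integral_mono (integrable_of_bounded (measurable_loss_integrand θcur)
    (fun _ => ramp_nonneg _) (fun _ => ramp_le_one _)) (hint1.add hint2) ?_
  intro p
  have := ramp_mul_le (sgn (model θ p.1)) p.2 (model θcur p.1)
  simp only [indicator_err_eq]
  exact this

/-- lemB : pseudoLossR θ θ' Q ≤ lossR θ' Q + errP θ Q -/
lemma pseudo_le_lossR (θ θ' : Euc d × ℝ) (Q : Measure (Euc d × ℝ))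
    [IsProbabilityMeasure Q] :
    pseudoLossR θ θ' Q ≤ lossR θ' Q + errP θ Q := by
  rw [pseudoLossR_eq, errP_eq]
  unfold lossR
  have hint1 : Integrable (fun p : Euc d × ℝ => ramp (p.2 * model θ' p.1)) Q :=
    integrable_of_bounded (measurable_loss_integrand θ')
      (fun _ => ramp_nonneg _) (fun _ => ramp_le_one _)
  have hint2 : Integrable
      (fun p => ({p : Euc d × ℝ | sgn (model θ p.1) ≠ p.2}).indicator (1 : Euc d × ℝ → ℝ) p) Q :=
    integrable_of_bounded ((measurable_const.indicator (measurableSet_err θ)))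
      (fun p => by rw [indicator_err_eq]; split <;> norm_num)
      (fun p => by rw [indicator_err_eq]; split <;> norm_num)
  rw [← integral_add hint1 hint2]
  refine integral_mono (integrable_of_bounded
    ((measurable_pseudo_integrand θ θ').comp measurable_fst)
    (fun _ => ramp_nonneg _) (fun _ => ramp_le_one _)) (hint1.add hint2) ?_
  intro p
  have h := ramp_mul_le p.2 (sgn (model θ p.1)) (model θ' p.1)
  simp only [indicator_err_eq]
  by_cases hc : sgn (model θ p.1) = p.2
  · simpa [hc] using h
  · have hc' : p.2 ≠ sgn (model θ p.1) := fun h' => hc h'.symm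
    simpa [hc, hc'] using h

end core

section lemc
variable {d : ℕ}

lemma errP_shift_le {P Q : Measure (Euc d × ℝ)} [IsProbabilityMeasure P]
    {ρ R : ℝ} (hρ : 0 ≤ ρ) (hR : 0 ≤ R) (hρR : ρ * R < 1)
    (hlabP : ∀ᵐ p ∂P, p.2 = 1 ∨ p.2 = -1)
    (hshift : IsShift P Q ρ) {θ : Euc d × ℝ} (hθ : ‖θ.1‖ ≤ R) :
    errP θ Q ≤ lossR θ P / (1 - ρ * R) := by
  obtain ⟨fneg, fpos, hmn, hmp, hbn, hbp, hQ⟩ := hshift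
  set F : Euc d × ℝ → Euc d × ℝ :=
    fun p => (if p.2 = 1 then fpos p.1 else fneg p.1, p.2) with hFdef
  have hset : MeasurableSet {p : Euc d × ℝ | p.2 = 1} :=
    measurable_snd (measurableSet_singleton (1:ℝ))
  have hF : Measurable F :=
    (Measurable.ite hset (hmp.comp measurable_fst) (hmn.comp measurable_fst)).prodMk
      measurable_snd
  have hS := measurableSet_err (d := d) θ
  have hA : MeasurableSet (F ⁻¹' {p : Euc d × ℝ | sgn (model θ p.1) ≠ p.2}) := hF hS
  have h1ρ : (0:ℝ) < 1 - ρ * R := by linarith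
  have herr : errP θ Q = ∫ p, (F ⁻¹' {p : Euc d × ℝ | sgn (model θ p.1) ≠ p.2}).indicator 1 p ∂P := by
    unfold errP
    rw [hQ, Measure.map_apply hF hS, integral_indicator_one hA]; rfl
  rw [herr]
  have hint1 : Integrable
      (fun p => (F ⁻¹' {p : Euc d × ℝ | sgn (model θ p.1) ≠ p.2}).indicator (1 : Euc d × ℝ → ℝ) p) P :=
    integrable_of_bounded (measurable_const.indicator hA)
      (fun p => Set.indicator_nonneg (fun _ _ => zero_le_one) p)
      (fun p => Set.indicator_le_self' (fun _ _ => zero_le_one) p |>.trans (le_refl 1))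
  have hint2 : Integrable (fun p : Euc d × ℝ => ramp (p.2 * model θ p.1)) P :=
    integrable_of_bounded (measurable_loss_integrand θ)
      (fun _ => ramp_nonneg _) (fun _ => ramp_le_one _)
  have hmono : ∀ᵐ p ∂P,
      (F ⁻¹' {p : Euc d × ℝ | sgn (model θ p.1) ≠ p.2}).indicator (1 : Euc d × ℝ → ℝ) p
        ≤ (1 - ρ * R)⁻¹ * ramp (p.2 * model θ p.1) := by
    filter_upwards [hlabP] with p hp
    by_cases hpA : p ∈ F ⁻¹' {p : Euc d × ℝ | sgn (model θ p.1) ≠ p.2}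
    · rw [Set.indicator_of_mem hpA]
      simp only [Set.mem_preimage, Set.mem_setOf_eq, hFdef] at hpA
      set x' : Euc d := if p.2 = 1 then fpos p.1 else fneg p.1 with hx'
      have hdist : ‖x' - p.1‖ ≤ ρ := by
        rw [hx']; split
        · exact hbp p.1
        · exact hbn p.1
      have hdiff : |model θ x' - model θ p.1| ≤ ρ * R := by
        have : model θ x' - model θ p.1 = (inner ℝ θ.1 (x' - p.1) : ℝ) := by
          simp [model, inner_sub_right]
        rw [this]
        calc |(inner ℝ θ.1 (x' - p.1) : ℝ)| ≤ ‖θ.1‖ * ‖x' - p.1‖ := abs_real_inner_le_norm _ _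
          _ ≤ R * ρ := mul_le_mul hθ hdist (norm_nonneg _) hR
          _ = ρ * R := mul_comm _ _
      have hneg : p.2 * model θ x' ≤ 0 := by
        rcases hp with hp1 | hp1
        · rw [hp1, one_mul]
          rw [hp1] at hpA
          by_contra hc
          push_neg at hc
          exact hpA (by simp [sgn, hc.le])
        · rw [hp1] at hpA ⊢
          rcases sgn_mem (model θ x') with hs | hs
          · have : (0:ℝ) ≤ model θ x' := by
              by_contra hc; push_neg at hc
              simp [sgn, not_le.2 hc] at hs
              linarith
            linarith
          · exact (hpA hs).elim
      have hmle : p.2 * model θ p.1 ≤ ρ * R := by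
        have habs : |p.2| = 1 := by rcases hp with h | h <;> simp [h]
        have : p.2 * model θ p.1 - p.2 * model θ x' = p.2 * (model θ p.1 - model θ x') := by ring
        have h2 : |p.2 * (model θ p.1 - model θ x')| ≤ ρ * R := by
          rw [abs_mul, habs, one_mul, abs_sub_comm]; exact hdiff
        have h3 := (abs_le.mp h2).2
        nlinarith [hneg]
      have hramp : 1 - ρ * R ≤ ramp (p.2 * model θ p.1) :=
        ramp_ge hmle (mul_nonneg hρ hR)
      rw [Pi.one_apply, le_inv_mul_iff₀ h1ρ, mul_one]
      exact hramp
    · rw [Set.indicator_of_notMem hpA]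
      exact mul_nonneg (inv_nonneg.2 h1ρ.le) (ramp_nonneg _)
  calc ∫ p, (F ⁻¹' {p : Euc d × ℝ | sgn (model θ p.1) ≠ p.2}).indicator 1 p ∂P
      ≤ ∫ p, (1 - ρ * R)⁻¹ * ramp (p.2 * model θ p.1) ∂P :=
        integral_mono_ae hint1 (hint2.const_mul _) hmono
    _ = (1 - ρ * R)⁻¹ * lossR θ P := integral_const_mul _ _
    _ = lossR θ P / (1 - ρ * R) := by rw [div_eq_inv_mul]
end lemc

lemma lossR_nonneg {d : ℕ} (θ : Euc d × ℝ) (P : Measure (Euc d × ℝ)) : 0 ≤ lossR θ P :=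
  integral_nonneg fun _ => ramp_nonneg _

lemma step_bound {d : ℕ} {P Q : Measure (Euc d × ℝ)}
    [IsProbabilityMeasure P] [IsProbabilityMeasure Q]
    {ρ R : ℝ} (hρ : 0 ≤ ρ) (hR : 0 ≤ R) (hρR : ρ * R < 1)
    (hlabP : ∀ᵐ p ∂P, p.2 = 1 ∨ p.2 = -1)
    (hshift : IsShift P Q ρ)
    {θprev θcur θst : Euc d × ℝ} (hθprev : ‖θprev.1‖ ≤ R)
    (hmin : pseudoLossR θprev θcur Q ≤ pseudoLossR θprev θst Q) :
    lossR θcur Q ≤ lossR θst Q + 2 * (lossR θprev P / (1 - ρ * R)) := by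
  have e := errP_shift_le hρ hR hρR hlabP hshift hθprev
  have a := lossR_le_pseudo θprev θcur Q
  have b := pseudo_le_lossR θprev θst Q
  linarith

/-- Gradual self-training over `T` ρ-shifted steps: the final ramp loss is at most
`(2/(1-ρR))^(T+1) ⋅ α₀`. -/
theorem stmt4 {d : ℕ} (R ρ α₀ : ℝ) (hR : 0 < R) (hρ : 0 ≤ ρ) (hρR : ρ * R < 1)
    (T : ℕ) (P : ℕ → Measure (Euc d × ℝ))
    (hprob : ∀ t ≤ T, IsProbabilityMeasure (P t))
    (hlab : ∀ t ≤ T, P t {p | p.2 = 1 ∨ p.2 = -1} = 1)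
    (hshift : ∀ t < T, IsShift (P t) (P (t + 1)) ρ)
    (θstar : Euc d × ℝ) (hθstarR : ‖θstar.1‖ ≤ R) (hθstar : ∀ t ≤ T, lossR θstar (P t) ≤ α₀)
    (θ : ℕ → Euc d × ℝ) (hθR : ∀ t ≤ T, ‖(θ t).1‖ ≤ R)
    (h0 : lossR (θ 0) (P 0) ≤ α₀)
    (hmin : ∀ t, 1 ≤ t → t ≤ T → ∀ θ'' : Euc d × ℝ, ‖θ''.1‖ ≤ R →
      pseudoLossR (θ (t - 1)) (θ t) (P t) ≤ pseudoLossR (θ (t - 1)) θ'' (P t)) :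
    lossR (θ T) (P T) ≤ (2 / (1 - ρ * R)) ^ (T + 1) * α₀ := by
  have h1ρ : (0:ℝ) < 1 - ρ * R := by linarith
  set β : ℝ := 2 / (1 - ρ * R) with hβ
  have hβ2 : 2 ≤ β := by
    rw [hβ, le_div_iff₀ h1ρ]; nlinarith [mul_nonneg hρ hR.le]
  have hα₀ : 0 ≤ α₀ := (lossR_nonneg θstar (P 0)).trans (hθstar 0 (Nat.zero_le T))
  have hlabset : MeasurableSet {p : Euc d × ℝ | p.2 = 1 ∨ p.2 = -1} :=
    (measurable_snd (measurableSet_singleton (1:ℝ))).union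
      (measurable_snd (measurableSet_singleton (-1:ℝ)))
  have hlabae : ∀ t ≤ T, ∀ᵐ p ∂(P t), p.2 = 1 ∨ p.2 = -1 := by
    intro t ht
    haveI := hprob t ht
    rw [ae_iff]
    exact (prob_compl_eq_zero_iff hlabset).2 (hlab t ht)
  -- main induction
  have key : ∀ t ≤ T, lossR (θ t) (P t) ≤ (2 * β ^ t - 1) * α₀ := by
    intro t
    induction t with
    | zero => intro _; rw [pow_zero]; linarith
    | succ n ih =>
      intro hn1
      have hnT : n ≤ T := Nat.le_of_succ_le hn1
      haveI := hprob n hnT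
      haveI := hprob (n+1) hn1
      have hm := hmin (n+1) (Nat.le_add_left 1 n) hn1 θstar hθstarR
      simp only [Nat.add_sub_cancel] at hm
      have hstep := step_bound hρ hR.le hρR (hlabae n hnT) (hshift n (Nat.lt_of_succ_le hn1))
        (hθR n hnT) hm
      have hIH := ih hnT
      have hβpos : 0 < β := by linarith
      have h2 : 2 * (lossR (θ n) (P n) / (1 - ρ * R)) = β * lossR (θ n) (P n) := by
        rw [hβ]; field_simp
      have h3 : β * lossR (θ n) (P n) ≤ β * ((2 * β ^ n - 1) * α₀) :=
        mul_le_mul_of_nonneg_left hIH hβpos.le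
      have hst := hθstar (n+1) hn1
      have hpow : (1:ℝ) ≤ β ^ n := one_le_pow₀ (by linarith : (1:ℝ) ≤ β)
      calc lossR (θ (n+1)) (P (n+1))
          ≤ lossR θstar (P (n+1)) + 2 * (lossR (θ n) (P n) / (1 - ρ * R)) := hstep
        _ ≤ α₀ + β * ((2 * β ^ n - 1) * α₀) := by rw [h2] at hstep; linarith
        _ ≤ (2 * β ^ (n+1) - 1) * α₀ := by
            rw [pow_succ]
            nlinarith [mul_nonneg (mul_nonneg (by linarith : (0:ℝ) ≤ β ^ n) (by linarith : (0:ℝ) ≤ β - 2)) hα₀]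
  have hfin := key T le_rfl
  have hpow : (1:ℝ) ≤ β ^ T := one_le_pow₀ (by linarith : (1:ℝ) ≤ β)
  calc lossR (θ T) (P T) ≤ (2 * β ^ T - 1) * α₀ := hfin
    _ ≤ β ^ (T + 1) * α₀ := by
        rw [pow_succ]
        nlinarith [mul_nonneg (mul_nonneg (by linarith : (0:ℝ) ≤ β ^ T) (by linarith : (0:ℝ) ≤ β - 2)) hα₀]
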